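/- Let f have L₂-sensitivity Δ, i.e., ‖f(D) − f(D')‖₂ ≤ Δ for all neighboring datasets. The Gaussian mechanism M(D) = f(D) + z with z ~ N(0, σ²I) satisfies (ε,δ)-differential privacy for ε ≥ 0 if and only if Φ(Δ/(2σ) − εσ/Δ) − e^ε Φ(−Δ/(2σ) − εσ/Δ) ≤ δ, where Φ is the standard normal CDF. -/

import Mathlib

open MeasureTheory ProbabilityTheory

/-- `(ε, δ)`-differential privacy. -/
def DiffPrivate {X Ω : Type*} [MeasurableSpace Ω] (Neighbor : X → X → Prop)
    (M : X → Measure Ω) (ε δ : ℝ) : Prop :=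
  ∀ D D', Neighbor D D' → ∀ O : Set Ω, MeasurableSet O →
    M D O ≤ ENNReal.ofReal (Real.exp ε) * M D' O + ENNReal.ofReal δ

/-- The standard normal cumulative distribution function
`Φ(t) = (1/√(2π)) ∫_{-∞}^{t} e^{-s²/2} ds`. -/
noncomputable def stdNormalCDF (t : ℝ) : ℝ :=
  ∫ s in Set.Iic t, (Real.sqrt (2 * Real.pi))⁻¹ * Real.exp (-(s ^ 2) / 2)

open Real
open scoped ENNReal NNReal

lemma lintegral_pi_prod : ∀ {n : ℕ} (μ : Measure ℝ) [IsProbabilityMeasure μ]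
    (f : Fin n → ℝ → ℝ≥0∞), (∀ i, Measurable (f i)) →
    ∫⁻ z, ∏ i, f i (z i) ∂(Measure.pi fun _ : Fin n => μ) = ∏ i, ∫⁻ x, f i x ∂μ := by
  intro n
  induction n with
  | zero => intro μ _ f hf; simp [lintegral_const]
  | succ n ih =>
    intro μ _ f hf
    have hmp := (measurePreserving_piFinSuccAbove (fun _ : Fin (n+1) => μ) 0).symm
    have hme : Measurable fun z : Fin (n+1) → ℝ => ∏ i, f i (z i) := by
      apply Finset.measurable_prod
      intro i _
      exact (hf i).comp (measurable_pi_apply i)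
    rw [← hmp.lintegral_comp hme]
    have hps : ∀ p : ℝ × (Fin n → ℝ),
        (MeasurableEquiv.piFinSuccAbove (fun _ : Fin (n+1) => ℝ) 0).symm p
          = Fin.cons p.1 p.2 := by
      intro p
      rw [MeasurableEquiv.piFinSuccAbove_symm_apply]
      exact Fin.insertNth_zero' p.1 p.2
    have : ∀ p : ℝ × (Fin n → ℝ),
        (∏ i, f i (((MeasurableEquiv.piFinSuccAbove (fun _ : Fin (n+1) => ℝ) 0).symm p) i))
        = f 0 p.1 * ∏ j : Fin n, f j.succ (p.2 j) := by
      intro p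
      rw [hps p, Fin.prod_univ_succ]
      simp
    simp only [this]
    rw [lintegral_prod]
    · have hmtail : Measurable fun y : Fin n → ℝ => ∏ j : Fin n, f j.succ (y j) :=
        Finset.measurable_prod _ fun j _ => (hf j.succ).comp (measurable_pi_apply j)
      have : ∀ x : ℝ, ∫⁻ y, f 0 x * ∏ j : Fin n, f j.succ (y j)
          ∂(Measure.pi fun _ : Fin n => μ)
          = f 0 x * ∫⁻ y, ∏ j : Fin n, f j.succ (y j) ∂(Measure.pi fun _ : Fin n => μ) :=
        fun x => lintegral_const_mul _ hmtail
      simp_rw [this]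
      rw [lintegral_mul_const _ (hf 0), ih μ (fun j => f j.succ) (fun j => hf j.succ),
        Fin.prod_univ_succ]

    · apply Measurable.aemeasurable
      exact ((hf 0).comp measurable_fst).mul
        (Finset.measurable_prod _ fun j _ =>
          (hf j.succ).comp ((measurable_pi_apply j).comp measurable_snd))


lemma gaussian_pdf_conv (v₁ v₂ : ℝ≥0) (h₁ : v₁ ≠ 0) (h₂ : v₂ ≠ 0) (x : ℝ) :
    ∫ y, gaussianPDFReal 0 v₁ (x - y) * gaussianPDFReal 0 v₂ y
      = gaussianPDFReal 0 (v₁ + v₂) x := by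
  have hv₁ : (0:ℝ) < v₁ := lt_of_le_of_ne v₁.coe_nonneg (by exact_mod_cast (Ne.symm h₁))
  have hv₂ : (0:ℝ) < v₂ := lt_of_le_of_ne v₂.coe_nonneg (by exact_mod_cast (Ne.symm h₂))
  set w : ℝ≥0 := v₁ * v₂ / (v₁ + v₂) with hw
  have hs : v₁ + v₂ ≠ 0 := by
    intro h; exact h₁ (by simpa using congrArg (·) h ▸ (add_eq_zero.mp h).1)
  have hwpos : (0:ℝ) < w := by
    rw [hw]; push_cast [NNReal.coe_div]
    positivity
  have key : ∀ y : ℝ, gaussianPDFReal 0 v₁ (x - y) * gaussianPDFReal 0 v₂ y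
      = gaussianPDFReal 0 (v₁ + v₂) x * gaussianPDFReal ((v₂ : ℝ) * x / (v₁ + v₂)) w y := by
    intro y
    unfold gaussianPDFReal
    have hconst : (√(2 * π * v₁))⁻¹ * (√(2 * π * v₂))⁻¹
        = (√(2 * π * (v₁ + v₂)))⁻¹ * (√(2 * π * w))⁻¹ := by
      rw [← mul_inv, ← mul_inv, ← Real.sqrt_mul (by positivity), ← Real.sqrt_mul (by positivity)]
      congr 2
      push_cast [hw, NNReal.coe_div]
      field_simp
    have hexp : rexp (-(x - y - 0)^2 / (2 * v₁)) * rexp (-(y - 0)^2 / (2 * v₂))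
        = rexp (-(x - 0)^2 / (2 * (v₁ + v₂)))
          * rexp (-(y - (v₂:ℝ) * x / (v₁ + v₂))^2 / (2 * w)) := by
      rw [← Real.exp_add, ← Real.exp_add]
      congr 1
      push_cast [hw, NNReal.coe_div]
      field_simp
      ring
    push_cast
    calc (√(2 * π * v₁))⁻¹ * rexp (-(x - y - 0)^2 / (2 * v₁))
        * ((√(2 * π * v₂))⁻¹ * rexp (-(y - 0)^2 / (2 * v₂)))
        = ((√(2 * π * v₁))⁻¹ * (√(2 * π * v₂))⁻¹)
          * (rexp (-(x - y - 0)^2 / (2 * v₁)) * rexp (-(y - 0)^2 / (2 * v₂))) := by ring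
      _ = _ := by rw [hconst, hexp]; push_cast; ring
  simp_rw [key]
  rw [integral_const_mul, integral_gaussianPDFReal_eq_one _ (by
    intro h; rw [h] at hwpos; simp at hwpos), mul_one]


lemma gaussian_conv (v₁ v₂ : ℝ≥0) :
    Measure.map (fun p : ℝ × ℝ => p.1 + p.2)
      ((gaussianReal 0 v₁).prod (gaussianReal 0 v₂)) = gaussianReal 0 (v₁ + v₂) := by
  by_cases h₁ : v₁ = 0
  · subst h₁
    rw [gaussianReal_zero_var, Measure.dirac_prod, zero_add,
      Measure.map_map measurable_add (measurable_prodMk_left)]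
    have : ((fun p : ℝ × ℝ => p.1 + p.2) ∘ Prod.mk (0:ℝ)) = id := by
      funext y; simp
    rw [this, Measure.map_id]
  by_cases h₂ : v₂ = 0
  · subst h₂
    rw [gaussianReal_zero_var, Measure.prod_dirac, add_zero,
      Measure.map_map measurable_add measurable_prodMk_right]
    have : ((fun p : ℝ × ℝ => p.1 + p.2) ∘ (fun x : ℝ => (x, (0:ℝ)))) = id := by
      funext y; simp
    rw [this, Measure.map_id]
  have hs : v₁ + v₂ ≠ 0 := fun h => h₁ (add_eq_zero.mp h).1
  ext s hs'
  rw [Measure.map_apply measurable_add hs']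
  have hpre : MeasurableSet ((fun p : ℝ × ℝ => p.1 + p.2) ⁻¹' s) := measurable_add hs'
  rw [Measure.prod_apply hpre]
  have hγ₁ : gaussianReal 0 v₁ = volume.withDensity (gaussianPDF 0 v₁) :=
    gaussianReal_of_var_ne_zero 0 h₁
  have hγ₂ : gaussianReal 0 v₂ = volume.withDensity (gaussianPDF 0 v₂) :=
    gaussianReal_of_var_ne_zero 0 h₂
  have hinner : ∀ x : ℝ, gaussianReal 0 v₂ (Prod.mk x ⁻¹' ((fun p : ℝ × ℝ => p.1 + p.2) ⁻¹' s))
      = ∫⁻ y, s.indicator (fun _ => (1:ℝ≥0∞)) (x + y) * gaussianPDF 0 v₂ y := by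
    intro x
    have hpm : Prod.mk x ⁻¹' ((fun p : ℝ × ℝ => p.1 + p.2) ⁻¹' s) = {y | x + y ∈ s} := rfl
    have hpre' : MeasurableSet {y : ℝ | x + y ∈ s} := measurable_const_add x hs'
    rw [hpm, hγ₂, withDensity_apply _ hpre', ← lintegral_indicator hpre' _]
    congr 1
    funext y
    by_cases hy : x + y ∈ s <;> simp [Set.indicator, hy]
  simp_rw [hinner]
  rw [hγ₁]
  rw [lintegral_withDensity_eq_lintegral_mul _ (measurable_gaussianPDF 0 v₁) (by
    apply Measurable.lintegral_prod_right
    exact ((measurable_indicator_const_iff 1).mpr hs').comp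
      (measurable_fst.add measurable_snd) |>.mul
      ((measurable_gaussianPDF 0 v₂).comp measurable_snd))]
  simp only [Pi.mul_apply]
  have hm2 : Measurable (gaussianPDF 0 v₂) := measurable_gaussianPDF 0 v₂
  have hindm : ∀ y : ℝ, Measurable fun x : ℝ => s.indicator (fun _ => (1:ℝ≥0∞)) (x + y) :=
    fun y => ((measurable_indicator_const_iff 1).mpr hs').comp (measurable_add_const y)
  have hstep1 : ∀ x : ℝ, gaussianPDF 0 v₁ x
        * ∫⁻ y, s.indicator (fun _ => (1:ℝ≥0∞)) (x + y) * gaussianPDF 0 v₂ y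
      = ∫⁻ y, gaussianPDF 0 v₁ x
          * (s.indicator (fun _ => (1:ℝ≥0∞)) (x + y) * gaussianPDF 0 v₂ y) := by
    intro x
    rw [lintegral_const_mul]
    exact (((measurable_indicator_const_iff 1).mpr hs').comp
      (measurable_const_add x)).mul hm2
  simp_rw [hstep1]
  rw [lintegral_lintegral_swap (by
    apply Measurable.aemeasurable
    exact ((measurable_gaussianPDF 0 v₁).comp measurable_fst).mul
      ((((measurable_indicator_const_iff 1).mpr hs').comp
        (measurable_fst.add measurable_snd)).mul (hm2.comp measurable_snd)))]
  have hstep2 : ∀ y : ℝ,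
      ∫⁻ x, gaussianPDF 0 v₁ x
          * (s.indicator (fun _ => (1:ℝ≥0∞)) (x + y) * gaussianPDF 0 v₂ y)
      = (∫⁻ x, s.indicator (fun _ => (1:ℝ≥0∞)) x * gaussianPDF 0 v₁ (x - y))
          * gaussianPDF 0 v₂ y := by
    intro y
    have : ∀ x : ℝ, gaussianPDF 0 v₁ x
          * (s.indicator (fun _ => (1:ℝ≥0∞)) (x + y) * gaussianPDF 0 v₂ y)
        = (s.indicator (fun _ => (1:ℝ≥0∞)) (x + y) * gaussianPDF 0 v₁ x)
          * gaussianPDF 0 v₂ y := by intro x; ring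
    simp_rw [this]
    rw [lintegral_mul_const (f := fun x => s.indicator (fun _ => (1:ℝ≥0∞)) (x + y) * gaussianPDF 0 v₁ x) _ ((hindm y).mul (measurable_gaussianPDF 0 v₁))]
    congr 1
    have := lintegral_add_right_eq_self
      (μ := (volume : Measure ℝ))
      (f := fun u => s.indicator (fun _ => (1:ℝ≥0∞)) u * gaussianPDF 0 v₁ (u - y)) y
    rw [← this]
    congr 1
    funext x
    simp
  simp_rw [hstep2]
  have hstep3 : ∀ y : ℝ,
      (∫⁻ x, s.indicator (fun _ => (1:ℝ≥0∞)) x * gaussianPDF 0 v₁ (x - y))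
          * gaussianPDF 0 v₂ y
      = ∫⁻ x, (s.indicator (fun _ => (1:ℝ≥0∞)) x * gaussianPDF 0 v₁ (x - y))
          * gaussianPDF 0 v₂ y := by
    intro y
    rw [lintegral_mul_const]
    exact ((measurable_indicator_const_iff 1).mpr hs').mul
      ((measurable_gaussianPDF 0 v₁).comp (measurable_id.sub measurable_const))
  simp_rw [hstep3]
  rw [lintegral_lintegral_swap (by
    apply Measurable.aemeasurable
    apply Measurable.mul
    · apply Measurable.mul
      · exact ((measurable_indicator_const_iff 1).mpr hs').comp measurable_snd
      · exact (measurable_gaussianPDF 0 v₁).comp (measurable_snd.sub measurable_fst)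
    · exact hm2.comp measurable_fst)]
  have hC : (0:ℝ) < (√(2 * π * v₁))⁻¹ := by
    have hv₁ : (0:ℝ) < v₁ := lt_of_le_of_ne v₁.coe_nonneg (by exact_mod_cast (Ne.symm h₁))
    positivity
  have hbd : ∀ t : ℝ, gaussianPDFReal 0 v₁ t ≤ (√(2 * π * v₁))⁻¹ := by
    intro t
    unfold gaussianPDFReal
    have hv₁ : (0:ℝ) < v₁ := lt_of_le_of_ne v₁.coe_nonneg (by exact_mod_cast (Ne.symm h₁))
    have : rexp (-(t - 0)^2 / (2 * v₁)) ≤ 1 := by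
      rw [Real.exp_le_one_iff]
      apply div_nonpos_of_nonpos_of_nonneg
      · nlinarith [sq_nonneg (t - 0)]
      · positivity
    calc (√(2 * π * ↑v₁))⁻¹ * rexp (-(t - 0) ^ 2 / (2 * ↑v₁))
        ≤ (√(2 * π * ↑v₁))⁻¹ * 1 := by
          apply mul_le_mul_of_nonneg_left this (le_of_lt hC)
      _ = _ := mul_one _
  have hconv : ∀ x : ℝ, ∫⁻ y, gaussianPDF 0 v₁ (x - y) * gaussianPDF 0 v₂ y
      = gaussianPDF 0 (v₁ + v₂) x := by
    intro x
    have hint : Integrable (fun y => gaussianPDFReal 0 v₁ (x - y) * gaussianPDFReal 0 v₂ y) := by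
      apply Integrable.mono' ((integrable_gaussianPDFReal 0 v₂).const_mul ((√(2 * π * v₁))⁻¹))
      · exact (((measurable_gaussianPDFReal 0 v₁).comp
          (measurable_const.sub measurable_id)).mul (measurable_gaussianPDFReal 0 v₂)).aestronglyMeasurable
      · filter_upwards with y
        rw [Real.norm_eq_abs, abs_of_nonneg (mul_nonneg (gaussianPDFReal_nonneg _ _ _)
          (gaussianPDFReal_nonneg _ _ _))]
        exact mul_le_mul_of_nonneg_right (hbd _) (gaussianPDFReal_nonneg _ _ _)
    simp_rw [gaussianPDF, ← ENNReal.ofReal_mul (gaussianPDFReal_nonneg 0 v₁ _)]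
    rw [← MeasureTheory.ofReal_integral_eq_lintegral_ofReal hint (by
      filter_upwards with y
      exact mul_nonneg (gaussianPDFReal_nonneg _ _ _) (gaussianPDFReal_nonneg _ _ _))]
    rw [gaussian_pdf_conv v₁ v₂ h₁ h₂ x]
  have hfin : ∀ x : ℝ, ∫⁻ y, (s.indicator (fun _ => (1:ℝ≥0∞)) x * gaussianPDF 0 v₁ (x - y))
          * gaussianPDF 0 v₂ y
      = s.indicator (fun _ => (1:ℝ≥0∞)) x * gaussianPDF 0 (v₁ + v₂) x := by
    intro x
    have : ∀ y : ℝ, (s.indicator (fun _ => (1:ℝ≥0∞)) x * gaussianPDF 0 v₁ (x - y))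
          * gaussianPDF 0 v₂ y
        = s.indicator (fun _ => (1:ℝ≥0∞)) x * (gaussianPDF 0 v₁ (x - y) * gaussianPDF 0 v₂ y) := by
      intro y; ring
    simp_rw [this]
    have hmm : Measurable fun y : ℝ => gaussianPDF 0 v₁ (x - y) * gaussianPDF 0 v₂ y :=
      ((measurable_gaussianPDF 0 v₁).comp (measurable_const.sub measurable_id)).mul hm2
    rw [lintegral_const_mul _ hmm, hconv x]
  simp_rw [hfin]
  have : ∀ x : ℝ, s.indicator (fun _ => (1:ℝ≥0∞)) x * gaussianPDF 0 (v₁ + v₂) x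
      = s.indicator (gaussianPDF 0 (v₁ + v₂)) x := by
    intro x
    by_cases hx : x ∈ s <;> simp [Set.indicator, hx]
  simp_rw [this]
  rw [lintegral_indicator hs', gaussianReal_of_var_ne_zero 0 hs, withDensity_apply _ hs']


lemma gaussian_proj : ∀ {n : ℕ} (v : ℝ≥0) (d : Fin n → ℝ),
    Measure.map (fun z : Fin n → ℝ => ∑ i, d i * z i)
      (Measure.pi fun _ : Fin n => gaussianReal 0 v)
      = gaussianReal 0 (Real.toNNReal (∑ i, d i ^ 2) * v) := by
  intro n
  induction n with
  | zero =>
    intro v d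
    have : (fun z : Fin 0 → ℝ => ∑ i, d i * z i) = fun _ => (0:ℝ) := by
      funext z; simp
    rw [this, Measure.map_const]
    simp [gaussianReal_zero_var]
  | succ n ih =>
    intro v d
    have hmp := (measurePreserving_piFinSuccAbove (fun _ : Fin (n+1) => gaussianReal 0 v) 0).symm
    rw [← hmp.map_eq, Measure.map_map (by
      exact Finset.measurable_sum _ fun i _ => (measurable_pi_apply i).const_mul _)
      (MeasurableEquiv.measurable _)]
    have hcomp : ((fun z : Fin (n+1) → ℝ => ∑ i, d i * z i)
          ∘ (MeasurableEquiv.piFinSuccAbove (fun _ : Fin (n+1) => ℝ) 0).symm)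
        = (fun p : ℝ × ℝ => p.1 + p.2)
          ∘ (Prod.map (fun x : ℝ => d 0 * x) (fun y : Fin n → ℝ => ∑ j, d j.succ * y j)) := by
      funext p
      simp only [Function.comp_apply, MeasurableEquiv.piFinSuccAbove_symm_apply,
        Prod.map_apply]
      have hins : (Fin.insertNthEquiv (fun _ : Fin (n+1) => ℝ) 0) p = Fin.cons p.1 p.2 := by
        simp [Fin.insertNthEquiv, Fin.insertNth_zero']
      rw [hins, Fin.sum_univ_succ]
      simp
    have hm1 : Measurable fun x : ℝ => d 0 * x := measurable_id.const_mul (d 0)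
    have hm2 : Measurable fun y : Fin n → ℝ => ∑ j : Fin n, d j.succ * y j :=
      Finset.measurable_sum _ fun (j : Fin n) _ => (measurable_pi_apply j).const_mul _
    rw [hcomp, ← Measure.map_map measurable_add (hm1.prodMap hm2),
      ← Measure.map_prod_map _ _ hm1 hm2]
    have h1 : Measure.map (fun x : ℝ => d 0 * x) (gaussianReal 0 v)
        = gaussianReal 0 (NNReal.mk ((d 0)^2) (sq_nonneg _) * v) := by
      have := gaussianReal_map_const_mul (μ := 0) (v := v) (d 0)
      simpa using this
    have h2 := ih v (fun j => d j.succ)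
    rw [h1, h2, gaussian_conv]
    rw [Fin.sum_univ_succ]
    congr 1
    rw [← NNReal.coe_inj]
    push_cast
    rw [Real.coe_toNNReal _ (Finset.sum_nonneg fun _ _ => sq_nonneg _),
      Real.coe_toNNReal _ (add_nonneg (sq_nonneg _) (Finset.sum_nonneg fun _ _ => sq_nonneg _))]
    ring


lemma stdNormalCDF_nonneg (t : ℝ) : 0 ≤ stdNormalCDF t :=
  setIntegral_nonneg measurableSet_Iic fun x _ => by positivity

lemma N01_Iic (t : ℝ) : gaussianReal 0 1 (Set.Iic t) = ENNReal.ofReal (stdNormalCDF t) := by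
  rw [gaussianReal_apply_eq_integral 0 one_ne_zero]
  congr 1
  apply setIntegral_congr_fun measurableSet_Iic
  intro x _
  unfold gaussianPDFReal
  norm_num

lemma N01_Ici (t : ℝ) : gaussianReal 0 1 (Set.Ici t) = ENNReal.ofReal (stdNormalCDF (-t)) := by
  have hmap : (gaussianReal 0 1).map (fun x : ℝ => (-1) * x) = gaussianReal 0 1 := by
    rw [gaussianReal_map_const_mul (-1)]
    norm_num
  have : Set.Ici t = (fun x : ℝ => (-1) * x) ⁻¹' (Set.Iic (-t)) := by
    ext x; simp [neg_le]
  rw [this, ← Measure.map_apply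
    ((measurable_const_mul (-1) : Measurable fun x : ℝ => (-1) * x)) measurableSet_Iic,
    hmap, N01_Iic]

lemma gauss_tail (w : ℝ≥0) (hw : w ≠ 0) (t : ℝ) :
    gaussianReal 0 w (Set.Ici t)
      = ENNReal.ofReal (stdNormalCDF (-t / Real.sqrt w)) := by
  have hwpos : (0:ℝ) < w := lt_of_le_of_ne w.coe_nonneg (by exact_mod_cast (Ne.symm hw))
  have hsw : (0:ℝ) < Real.sqrt w := Real.sqrt_pos.mpr hwpos
  have hmap : (gaussianReal 0 1).map (fun x : ℝ => Real.sqrt w * x) = gaussianReal 0 w := by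
    rw [gaussianReal_map_const_mul (Real.sqrt w)]
    rw [mul_zero]
    congr 1
    rw [← NNReal.coe_inj]
    push_cast
    rw [Real.sq_sqrt (le_of_lt hwpos), mul_one]
  have hpre : (fun x : ℝ => Real.sqrt w * x) ⁻¹' (Set.Ici t) = Set.Ici (t / Real.sqrt w) := by
    ext x
    simp only [Set.mem_preimage, Set.mem_Ici]
    constructor <;> intro h
    · rw [div_le_iff₀ hsw]; linarith
    · have := (div_le_iff₀ hsw).mp h; linarith
  rw [← hmap, Measure.map_apply
    ((measurable_const_mul _ : Measurable fun x : ℝ => Real.sqrt w * x)) measurableSet_Ici,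
    hpre, N01_Ici, neg_div]

lemma oneDimCM (v : ℝ≥0) (hv : v ≠ 0) (a : ℝ) :
    (gaussianReal 0 v).withDensity
        (fun x => ENNReal.ofReal (rexp ((2 * a * x - a ^ 2) / (2 * v))))
      = gaussianReal a v := by
  have hvpos : (0:ℝ) < v := lt_of_le_of_ne v.coe_nonneg (by exact_mod_cast (Ne.symm hv))
  rw [gaussianReal_of_var_ne_zero 0 hv, gaussianReal_of_var_ne_zero a hv,
    ← withDensity_mul _ (measurable_gaussianPDF 0 v) (by
      apply ENNReal.measurable_ofReal.comp
      exact (Real.continuous_exp.comp (by continuity)).measurable)]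
  congr 1
  funext x
  simp only [Pi.mul_apply, gaussianPDF]
  rw [← ENNReal.ofReal_mul (gaussianPDFReal_nonneg _ _ _)]
  congr 1
  unfold gaussianPDFReal
  rw [mul_assoc, ← Real.exp_add]
  congr 1
  field_simp
  ring


noncomputable def stdPhi (u : ℝ) : ℝ := (Real.sqrt (2 * Real.pi))⁻¹ * Real.exp (-(u ^ 2) / 2)

lemma stdPhi_pos (u : ℝ) : 0 < stdPhi u := by
  unfold stdPhi
  have := Real.pi_pos
  positivity

lemma stdPhi_cont : Continuous stdPhi := by
  unfold stdPhi
  continuity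

lemma stdPhi_integrable : Integrable stdPhi := by
  have h := integrable_gaussianPDFReal 0 1
  have : gaussianPDFReal 0 1 = stdPhi := by
    funext x
    unfold gaussianPDFReal stdPhi
    norm_num
  rwa [this] at h

lemma stdPhi_mono {x y : ℝ} (hx : x ≤ y) (hy : y ≤ 0) : stdPhi x ≤ stdPhi y := by
  unfold stdPhi
  apply mul_le_mul_of_nonneg_left _ (by positivity)
  apply Real.exp_le_exp.mpr
  nlinarith

lemma stdNormalCDF_eq (t : ℝ) : stdNormalCDF t = ∫ u in Set.Iic t, stdPhi u := rfl

/-- pointwise ratio identity -/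
lemma phi_shift (ε a u : ℝ) :
    Real.exp ε * stdPhi (u - a) = stdPhi u * Real.exp (ε + u * a - a ^ 2 / 2) := by
  unfold stdPhi
  rw [← mul_assoc, mul_comm (Real.exp ε), mul_assoc, mul_assoc, ← Real.exp_add, ← Real.exp_add]
  congr 2
  ring

noncomputable def posp (ε a u : ℝ) : ℝ := max (stdPhi u - Real.exp ε * stdPhi (u - a)) 0

lemma posp_nonneg (ε a u : ℝ) : 0 ≤ posp ε a u := le_max_right _ _

lemma posp_le_phi (ε a u : ℝ) : posp ε a u ≤ stdPhi u := by
  apply max_le _ (le_of_lt (stdPhi_pos u))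
  have : 0 ≤ Real.exp ε * stdPhi (u - a) :=
    mul_nonneg (Real.exp_nonneg ε) (le_of_lt (stdPhi_pos _))
  linarith

lemma posp_cont (ε a : ℝ) : Continuous (posp ε a) := by
  apply Continuous.max _ continuous_const
  exact stdPhi_cont.sub (continuous_const.mul (stdPhi_cont.comp (continuous_id.sub continuous_const)))

lemma posp_integrable (ε a : ℝ) : Integrable (posp ε a) := by
  apply Integrable.mono' stdPhi_integrable (posp_cont ε a).aestronglyMeasurable
  filter_upwards with u
  rw [Real.norm_eq_abs, abs_of_nonneg (posp_nonneg ε a u)]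
  exact posp_le_phi ε a u

lemma posp_eq_on_Iic {ε a : ℝ} (ha : 0 < a) {u : ℝ} (hu : u ≤ a / 2 - ε / a) :
    posp ε a u = stdPhi u - Real.exp ε * stdPhi (u - a) := by
  apply max_eq_left
  rw [phi_shift]
  have h1 : Real.exp (ε + u * a - a ^ 2 / 2) ≤ 1 := by
    rw [Real.exp_le_one_iff]
    have : u * a ≤ (a / 2 - ε / a) * a := by
      apply mul_le_mul_of_nonneg_right hu (le_of_lt ha)
    have ha' : (a / 2 - ε / a) * a = a ^ 2 / 2 - ε := by field_simp
    nlinarith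
  nlinarith [stdPhi_pos u]

lemma posp_eq_zero_on {ε a : ℝ} (ha : 0 < a) {u : ℝ} (hu : a / 2 - ε / a < u) :
    posp ε a u = 0 := by
  apply max_eq_right
  rw [phi_shift]
  have h1 : (1:ℝ) ≤ Real.exp (ε + u * a - a ^ 2 / 2) := by
    rw [Real.one_le_exp_iff]
    have : (a / 2 - ε / a) * a < u * a := by
      apply mul_lt_mul_of_pos_right hu ha
    have ha' : (a / 2 - ε / a) * a = a ^ 2 / 2 - ε := by field_simp
    nlinarith
  nlinarith [stdPhi_pos u]

/-- integral representation of the privacy curve -/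
lemma curve_repr (ε a : ℝ) (ha : 0 < a) :
    stdNormalCDF (a / 2 - ε / a) - Real.exp ε * stdNormalCDF (-(a / 2) - ε / a)
      = ∫ u, posp ε a u := by
  have h₂ : -(a / 2) - ε / a + a = a / 2 - ε / a := by ring
  -- translation of the second integral
  have htrans : ∫ s in Set.Iic (-(a / 2) - ε / a), stdPhi s
      = ∫ u in Set.Iic (a / 2 - ε / a), stdPhi (u - a) := by
    have hmp := measurePreserving_add_right (volume : Measure ℝ) a
    have hemb : MeasurableEmbedding (fun x : ℝ => x + a) :=
      (Homeomorph.addRight a).measurableEmbedding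
    have := hmp.setIntegral_preimage_emb hemb (fun u => stdPhi (u - a))
      (Set.Iic (a / 2 - ε / a))
    rw [← this]
    have hpre : (fun x : ℝ => x + a) ⁻¹' Set.Iic (a / 2 - ε / a)
        = Set.Iic (-(a / 2) - ε / a) := by
      ext x
      simp only [Set.mem_preimage, Set.mem_Iic]
      constructor <;> intro h <;> linarith
    rw [hpre]
    apply setIntegral_congr_fun measurableSet_Iic
    intro x _
    simp
  have hsub : stdNormalCDF (a / 2 - ε / a) - Real.exp ε * stdNormalCDF (-(a / 2) - ε / a)
      = ∫ u in Set.Iic (a / 2 - ε / a), (stdPhi u - Real.exp ε * stdPhi (u - a)) := by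
    rw [stdNormalCDF_eq, stdNormalCDF_eq, htrans, ← integral_const_mul, ← integral_sub]
    · exact stdPhi_integrable.restrict
    · apply Integrable.const_mul
      apply Integrable.restrict
      have : Integrable (fun u : ℝ => stdPhi (u - a)) := by
        have := stdPhi_integrable
        exact this.comp_sub_right a
      exact this
  rw [hsub]
  have hsplit : ∫ u, posp ε a u
      = (∫ u in Set.Iic (a / 2 - ε / a), posp ε a u)
        + ∫ u in Set.Ioi (a / 2 - ε / a), posp ε a u := by
    rw [← integral_add_compl measurableSet_Iic (posp_integrable ε a)]
    congr 1
    rw [Set.compl_Iic]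
  have h1 : ∫ u in Set.Iic (a / 2 - ε / a), posp ε a u
      = ∫ u in Set.Iic (a / 2 - ε / a), (stdPhi u - Real.exp ε * stdPhi (u - a)) := by
    apply setIntegral_congr_fun measurableSet_Iic
    intro u hu
    exact posp_eq_on_Iic ha hu
  have h2 : ∫ u in Set.Ioi (a / 2 - ε / a), posp ε a u = 0 := by
    apply setIntegral_eq_zero_of_forall_eq_zero
    intro u hu
    exact posp_eq_zero_on ha hu
  rw [hsplit, h1, h2, add_zero]

lemma posp_mono (ε : ℝ) (hε : 0 ≤ ε) {a a' : ℝ} (ha : 0 < a) (haa : a ≤ a') (u : ℝ) :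
    posp ε a u ≤ posp ε a' u := by
  by_cases hu : a / 2 - ε / a < u
  · rw [posp_eq_zero_on ha hu]
    exact posp_nonneg ε a' u
  push_neg at hu
  have hu2 : u - a ≤ 0 := by
    have h1 : ε / a ≥ 0 := div_nonneg hε (le_of_lt ha)
    nlinarith
  have : Real.exp ε * stdPhi (u - a') ≤ Real.exp ε * stdPhi (u - a) := by
    apply mul_le_mul_of_nonneg_left _ (Real.exp_nonneg ε)
    exact stdPhi_mono (by linarith) hu2
  calc posp ε a u = stdPhi u - Real.exp ε * stdPhi (u - a) := posp_eq_on_Iic ha hu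
    _ ≤ stdPhi u - Real.exp ε * stdPhi (u - a') := by linarith
    _ ≤ posp ε a' u := le_max_left _ _

lemma curve_mono (ε : ℝ) (hε : 0 ≤ ε) {a a' : ℝ} (ha : 0 < a) (haa : a ≤ a') :
    stdNormalCDF (a / 2 - ε / a) - Real.exp ε * stdNormalCDF (-(a / 2) - ε / a)
      ≤ stdNormalCDF (a' / 2 - ε / a') - Real.exp ε * stdNormalCDF (-(a' / 2) - ε / a') := by
  rw [curve_repr ε a ha, curve_repr ε a' (lt_of_lt_of_le ha haa)]
  apply integral_mono (posp_integrable ε a) (posp_integrable ε a')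
  intro u
  exact posp_mono ε hε ha haa u

lemma curve_pos (ε : ℝ) {a : ℝ} (ha : 0 < a) :
    0 < stdNormalCDF (a / 2 - ε / a) - Real.exp ε * stdNormalCDF (-(a / 2) - ε / a) := by
  rw [curve_repr ε a ha]
  rw [integral_pos_iff_support_of_nonneg_ae
    (ae_of_all _ (posp_nonneg ε a)) (posp_integrable ε a)]
  have hsub : Set.Iio (a / 2 - ε / a) ⊆ Function.support (posp ε a) := by
    intro u hu
    have hu' : u < a / 2 - ε / a := hu
    have heq := posp_eq_on_Iic ha (le_of_lt hu')
    rw [Function.mem_support, heq]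
    rw [phi_shift]
    have h1 : Real.exp (ε + u * a - a ^ 2 / 2) < 1 := by
      rw [Real.exp_lt_one_iff]
      have : u * a < (a / 2 - ε / a) * a := mul_lt_mul_of_pos_right hu' ha
      have ha' : (a / 2 - ε / a) * a = a ^ 2 / 2 - ε := by field_simp
      nlinarith
    nlinarith [stdPhi_pos u]
  calc (0:ℝ≥0∞) < volume (Set.Iio (a / 2 - ε / a)) := by simp
    _ ≤ volume (Function.support (posp ε a)) := measure_mono hsub


lemma dp_combo {Ω : Type*} [MeasurableSpace Ω] (μ ν : Measure Ω) [IsFiniteMeasure ν]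
    (E D : ℝ≥0∞) (hE : E ≠ ∞) (A : Set Ω) (hA : MeasurableSet A)
    (h₁ : ∀ S, MeasurableSet S → S ⊆ Aᶜ → μ S ≤ E * ν S)
    (h₂ : ∀ S, MeasurableSet S → S ⊆ A → E * ν S ≤ μ S)
    (h₃ : μ A ≤ E * ν A + D) :
    ∀ O : Set Ω, MeasurableSet O → μ O ≤ E * ν O + D := by
  intro O hO
  have hOA : MeasurableSet (O ∩ A) := hO.inter hA
  have hdiff : MeasurableSet (O \ A) := hO.diff hA
  have hAdO : MeasurableSet (A \ O) := hA.diff hO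
  have hfin : E * ν (A \ O) ≠ ∞ := ENNReal.mul_ne_top hE (measure_ne_top ν _)
  have key : μ (O ∩ A) ≤ E * ν (O ∩ A) + D := by
    have e1 : μ (A ∩ O) + μ (A \ O) = μ A := measure_inter_add_diff A hO
    have e2 : ν (A ∩ O) + ν (A \ O) = ν A := measure_inter_add_diff A hO
    have step : μ (A ∩ O) + E * ν (A \ O) ≤ (E * ν (A ∩ O) + D) + E * ν (A \ O) := by
      calc μ (A ∩ O) + E * ν (A \ O) ≤ μ (A ∩ O) + μ (A \ O) :=
            add_le_add_right (h₂ _ hAdO Set.diff_subset) _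
        _ = μ A := e1
        _ ≤ E * ν A + D := h₃
        _ = E * (ν (A ∩ O) + ν (A \ O)) + D := by rw [e2]
        _ = (E * ν (A ∩ O) + D) + E * ν (A \ O) := by ring
    have := (ENNReal.add_le_add_iff_right hfin).mp step
    rwa [Set.inter_comm] at this
  calc μ O = μ (O ∩ A) + μ (O \ A) := (measure_inter_add_diff O hA).symm
    _ ≤ (E * ν (O ∩ A) + D) + E * ν (O \ A) := by
        apply add_le_add key
        exact h₁ _ hdiff (fun x hx => hx.2)
    _ = E * (ν (O ∩ A) + ν (O \ A)) + D := by ring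
    _ = E * ν O + D := by rw [measure_inter_add_diff O hA]


lemma pi_shift {k : ℕ} (v : ℝ≥0) (d : Fin k → ℝ) :
    Measure.map (fun z : Fin k → ℝ => d + z) (Measure.pi fun _ : Fin k => gaussianReal 0 v)
      = Measure.pi (fun i => gaussianReal (d i) v) := by
  have hmadd : Measurable fun z : Fin k → ℝ => d + z :=
    measurable_pi_lambda _ fun i => (measurable_pi_apply i).const_add _
  refine (Measure.pi_eq fun s hs => ?_).symm
  rw [Measure.map_apply hmadd (MeasurableSet.univ_pi hs)]
  have hpre : (fun z : Fin k → ℝ => d + z) ⁻¹' (Set.pi Set.univ s)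
      = Set.pi Set.univ (fun i => (fun t => d i + t) ⁻¹' s i) := by
    ext z
    simp [Set.mem_pi, Pi.add_apply]
  rw [hpre, Measure.pi_pi]
  congr 1
  funext i
  rw [← Measure.map_apply (measurable_const_add (d i)) (hs i), gaussianReal_map_const_add,
    zero_add]

lemma pi_density {k : ℕ} (v : ℝ≥0) (hv : v ≠ 0) (d : Fin k → ℝ) :
    (Measure.pi fun _ : Fin k => gaussianReal 0 v).withDensity
        (fun z => ENNReal.ofReal
          (rexp ((2 * ∑ i, d i * z i - ∑ i, d i ^ 2) / (2 * v))))
      = Measure.pi (fun i => gaussianReal (d i) v) := by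
  refine (Measure.pi_eq fun s hs => ?_).symm
  have hbox : MeasurableSet (Set.pi Set.univ s) := MeasurableSet.univ_pi hs
  rw [withDensity_apply _ hbox, ← lintegral_indicator hbox _]
  have hsplit : ∀ z : Fin k → ℝ,
      (Set.pi Set.univ s).indicator
        (fun z => ENNReal.ofReal
          (rexp ((2 * ∑ i, d i * z i - ∑ i, d i ^ 2) / (2 * v)))) z
      = ∏ i, ((s i).indicator (fun _ => (1:ℝ≥0∞)) (z i)
          * ENNReal.ofReal (rexp ((2 * d i * z i - d i ^ 2) / (2 * v)))) := by
    intro z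
    have hexp : rexp ((2 * ∑ i, d i * z i - ∑ i, d i ^ 2) / (2 * v))
        = ∏ i, rexp ((2 * d i * z i - d i ^ 2) / (2 * v)) := by
      rw [← Real.exp_sum]
      congr 1
      rw [← Finset.sum_div, Finset.sum_sub_distrib, Finset.mul_sum]
      congr 2
      exact Finset.sum_congr rfl fun i _ => (mul_assoc 2 (d i) (z i)).symm
    by_cases hz : z ∈ Set.pi Set.univ s
    · rw [Set.indicator_of_mem hz, hexp, ENNReal.ofReal_prod_of_nonneg (by
        intro i _; positivity)]
      congr 1
      funext i
      rw [Set.indicator_of_mem (hz i (Set.mem_univ i)), one_mul]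
    · rw [Set.indicator_of_notMem hz]
      rw [Set.mem_univ_pi] at hz
      push_neg at hz
      obtain ⟨i, hi⟩ := hz
      symm
      apply Finset.prod_eq_zero (Finset.mem_univ i)
      rw [Set.indicator_of_notMem hi, zero_mul]
  simp_rw [hsplit]
  have hFm : ∀ i : Fin k, Measurable fun t : ℝ =>
      (s i).indicator (fun _ => (1:ℝ≥0∞)) t
        * ENNReal.ofReal (rexp ((2 * d i * t - d i ^ 2) / (2 * (v:ℝ)))) := by
    intro i
    apply Measurable.mul
    · exact (measurable_indicator_const_iff 1).mpr (hs i)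
    · exact ENNReal.measurable_ofReal.comp
        ((Real.continuous_exp.comp (by continuity)).measurable)
  rw [lintegral_pi_prod _ _ hFm]
  congr 1
  funext i
  have : ∀ t : ℝ, (s i).indicator (fun _ => (1:ℝ≥0∞)) t
        * ENNReal.ofReal (rexp ((2 * d i * t - d i ^ 2) / (2 * v)))
      = (s i).indicator
          (fun t => ENNReal.ofReal (rexp ((2 * d i * t - d i ^ 2) / (2 * v)))) t := by
    intro t
    by_cases ht : t ∈ s i <;> simp [Set.indicator, ht]
  simp_rw [this]
  rw [lintegral_indicator (hs i) _, ← withDensity_apply _ (hs i), oneDimCM v hv (d i)]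


lemma measurable_lin {k : ℕ} (d : Fin k → ℝ) :
    Measurable fun z : Fin k → ℝ => ∑ i, d i * z i :=
  Finset.measurable_sum _ fun i _ => (measurable_pi_apply i).const_mul _

lemma halfspace_set_meas {k : ℕ} (d : Fin k → ℝ) (t : ℝ) :
    MeasurableSet {z : Fin k → ℝ | t ≤ ∑ i, d i * z i} :=
  measurable_lin d measurableSet_Ici

lemma halfspace (σ : ℝ) (hσ : 0 < σ) {k : ℕ} (d : Fin k → ℝ)
    (hd : 0 < Real.sqrt (∑ i, d i ^ 2)) (t : ℝ) :
    (Measure.pi fun _ : Fin k => gaussianReal 0 (Real.toNNReal (σ ^ 2)))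
        {z | t ≤ ∑ i, d i * z i}
      = ENNReal.ofReal (stdNormalCDF (-t / (Real.sqrt (∑ i, d i ^ 2) * σ))) := by
  have hsnn : (0:ℝ) ≤ ∑ i, d i ^ 2 := Finset.sum_nonneg fun _ _ => sq_nonneg _
  have hspos : (0:ℝ) < ∑ i, d i ^ 2 := by
    rcases lt_or_eq_of_le hsnn with h | h
    · exact h
    · exfalso; rw [← h, Real.sqrt_zero] at hd; exact lt_irrefl 0 hd
  have hset : {z : Fin k → ℝ | t ≤ ∑ i, d i * z i}
      = (fun z : Fin k → ℝ => ∑ i, d i * z i) ⁻¹' Set.Ici t := rfl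
  rw [hset, ← Measure.map_apply (measurable_lin d) measurableSet_Ici, gaussian_proj]
  have hw : Real.toNNReal (∑ i, d i ^ 2) * Real.toNNReal (σ ^ 2) ≠ 0 := by
    apply mul_ne_zero
    · simp only [ne_eq, Real.toNNReal_eq_zero, not_le]; exact hspos
    · simp only [ne_eq, Real.toNNReal_eq_zero, not_le]; positivity
  rw [gauss_tail _ hw]
  congr 2
  push_cast
  rw [Real.coe_toNNReal _ hsnn, Real.coe_toNNReal _ (sq_nonneg σ),
    Real.sqrt_mul hsnn, Real.sqrt_sq (le_of_lt hσ)]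

lemma map_halfspace (v : ℝ≥0) {k : ℕ} (d x : Fin k → ℝ) (t : ℝ) :
    Measure.map (fun z => x + z) (Measure.pi fun _ : Fin k => gaussianReal 0 v)
        {ω | t ≤ ∑ i, d i * ω i}
      = (Measure.pi fun _ : Fin k => gaussianReal 0 v)
          {z | t - ∑ i, d i * x i ≤ ∑ i, d i * z i} := by
  have hmadd : Measurable fun z : Fin k → ℝ => x + z :=
    measurable_pi_lambda _ fun i => (measurable_pi_apply i).const_add _
  rw [Measure.map_apply hmadd (halfspace_set_meas d t)]
  congr 1
  ext z
  simp only [Set.mem_preimage, Set.mem_setOf_eq, Pi.add_apply]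
  have : ∑ i, d i * (x i + z i) = (∑ i, d i * x i) + ∑ i, d i * z i := by
    rw [← Finset.sum_add_distrib]
    congr 1; funext i; ring
  rw [this]
  constructor <;> intro h <;> linarith


lemma curve_rw (σ ε c : ℝ) :
    (c / σ) / 2 - ε / (c / σ) = c / (2 * σ) - ε * σ / c
      ∧ -((c / σ) / 2) - ε / (c / σ) = -(c / (2 * σ)) - ε * σ / c := by
  rw [div_div, mul_comm σ 2, div_div_eq_mul_div]
  exact ⟨rfl, rfl⟩

lemma curve_pos' (σ ε : ℝ) (hσ : 0 < σ) {c : ℝ} (hc : 0 < c) :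
    0 < stdNormalCDF (c / (2 * σ) - ε * σ / c)
      - Real.exp ε * stdNormalCDF (-(c / (2 * σ)) - ε * σ / c) := by
  have h := curve_pos ε (a := c / σ) (by positivity)
  rwa [(curve_rw σ ε c).1, (curve_rw σ ε c).2] at h

lemma curve_mono' (σ ε : ℝ) (hσ : 0 < σ) (hε : 0 ≤ ε) {c Δ : ℝ} (hc : 0 < c) (hcΔ : c ≤ Δ) :
    stdNormalCDF (c / (2 * σ) - ε * σ / c)
        - Real.exp ε * stdNormalCDF (-(c / (2 * σ)) - ε * σ / c)
      ≤ stdNormalCDF (Δ / (2 * σ) - ε * σ / Δ)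
        - Real.exp ε * stdNormalCDF (-(Δ / (2 * σ)) - ε * σ / Δ) := by
  have h := curve_mono ε hε (a := c / σ) (a' := Δ / σ) (by positivity)
    (div_le_div_of_nonneg_right hcΔ hσ.le)
  rwa [(curve_rw σ ε c).1, (curve_rw σ ε c).2, (curve_rw σ ε Δ).1, (curve_rw σ ε Δ).2] at h


lemma pair_bound (σ ε δ' : ℝ) (hσ : 0 < σ) (hε : 0 ≤ ε) {k : ℕ} (x x' : Fin k → ℝ)
    (hd : 0 < Real.sqrt (∑ i, (x i - x' i) ^ 2))
    (hδ' : stdNormalCDF (Real.sqrt (∑ i, (x i - x' i) ^ 2) / (2 * σ)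
          - ε * σ / Real.sqrt (∑ i, (x i - x' i) ^ 2))
        - Real.exp ε * stdNormalCDF (-(Real.sqrt (∑ i, (x i - x' i) ^ 2) / (2 * σ))
          - ε * σ / Real.sqrt (∑ i, (x i - x' i) ^ 2)) ≤ δ') :
    ∀ O : Set (Fin k → ℝ), MeasurableSet O →
      Measure.map (fun z => x + z)
          (Measure.pi fun _ : Fin k => gaussianReal 0 (Real.toNNReal (σ ^ 2))) O
        ≤ ENNReal.ofReal (Real.exp ε)
            * Measure.map (fun z => x' + z)
                (Measure.pi fun _ : Fin k => gaussianReal 0 (Real.toNNReal (σ ^ 2))) O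
          + ENNReal.ofReal δ' := by
  intro O hO
  set v : ℝ≥0 := Real.toNNReal (σ ^ 2) with hvdef
  have hvc : (v : ℝ) = σ ^ 2 := Real.coe_toNNReal _ (sq_nonneg σ)
  have hv : v ≠ 0 := by
    simp only [hvdef, ne_eq, Real.toNNReal_eq_zero, not_le]
    positivity
  set d : Fin k → ℝ := x - x' with hddef
  have hdi : ∀ i, d i = x i - x' i := fun i => rfl
  set s : ℝ := ∑ i, d i ^ 2 with hsdef
  have hs_eq : ∑ i, (x i - x' i) ^ 2 = s := rfl
  set c : ℝ := Real.sqrt s with hcdef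
  have hc : 0 < c := by rw [hcdef, ← hs_eq]; exact hd
  have hcs : c ^ 2 = s := by
    rw [hcdef]
    exact Real.sq_sqrt (Finset.sum_nonneg fun _ _ => sq_nonneg _)
  have hspos : 0 < s := by nlinarith
  set Γ : Measure (Fin k → ℝ) := Measure.pi fun _ : Fin k => gaussianReal 0 v with hΓdef
  set ρ : (Fin k → ℝ) → ℝ≥0∞ :=
    fun z => ENNReal.ofReal (rexp ((2 * ∑ i, d i * z i - ∑ i, d i ^ 2) / (2 * (v:ℝ)))) with hρdef
  have hKL : Γ.withDensity ρ = Measure.map (fun z => d + z) Γ :=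
    (pi_density v hv d).trans (pi_shift v d).symm
  -- x + z = x' + (d + z)
  have hm1 : Measurable fun z : Fin k → ℝ => x' + z :=
    measurable_pi_lambda _ fun i => (measurable_pi_apply i).const_add _
  have hm2 : Measurable fun z : Fin k → ℝ => d + z :=
    measurable_pi_lambda _ fun i => (measurable_pi_apply i).const_add _
  have hcomp : Measure.map (fun z => x + z) Γ = Measure.map (fun z => x' + z) (Γ.withDensity ρ) := by
    rw [hKL, Measure.map_map hm1 hm2]
    congr 1
    funext z
    simp only [Function.comp_apply]
    funext i
    simp only [Pi.add_apply, hdi i]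
    ring
  set T : ℝ := ε * σ ^ 2 + s / 2 with hTdef
  set A : Set (Fin k → ℝ) := {z | T ≤ ∑ i, d i * z i} with hAdef
  have hAm : MeasurableSet A := halfspace_set_meas d T
  have hmx' : Measurable fun z : Fin k → ℝ => x' + z :=
    measurable_pi_lambda _ fun i => (measurable_pi_apply i).const_add _
  -- the two tail values
  have hψ₁ : (Γ.withDensity ρ) A = ENNReal.ofReal (stdNormalCDF (c / (2 * σ) - ε * σ / c)) := by
    rw [hKL]
    rw [map_halfspace v d d T]
    have hdd : ∑ i, d i * d i = s := by
      rw [hsdef]; congr 1; funext i; ring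
    rw [hdd]
    rw [halfspace σ hσ d (by rw [← hsdef, ← hcdef]; exact hc)]
    congr 2
    rw [← hsdef, ← hcdef, hTdef]
    have : ε * σ ^ 2 + s / 2 - s = ε * σ ^ 2 - s / 2 := by ring
    rw [this]
    rw [← hcs]
    field_simp
    ring
  have hψ₂ : Γ A = ENNReal.ofReal (stdNormalCDF (-(c / (2 * σ)) - ε * σ / c)) := by
    rw [hΓdef, hAdef, halfspace σ hσ d (by rw [← hsdef, ← hcdef]; exact hc)]
    congr 2
    rw [← hsdef, ← hcdef, hTdef, ← hcs]
    field_simp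
    ring
  -- pointwise density bounds
  have hρ_le : ∀ z : Fin k → ℝ, z ∈ Aᶜ → ρ z ≤ ENNReal.ofReal (Real.exp ε) := by
    intro z hz
    simp only [hAdef, Set.mem_compl_iff, Set.mem_setOf_eq, not_le] at hz
    apply ENNReal.ofReal_le_ofReal
    apply Real.exp_le_exp.mpr
    rw [hvc, div_le_iff₀ (by positivity)]
    rw [hTdef] at hz
    rw [← hsdef]
    nlinarith
  have hρ_ge : ∀ z : Fin k → ℝ, z ∈ A → ENNReal.ofReal (Real.exp ε) ≤ ρ z := by
    intro z hz
    simp only [hAdef, Set.mem_setOf_eq] at hz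
    apply ENNReal.ofReal_le_ofReal
    apply Real.exp_le_exp.mpr
    rw [hvc, le_div_iff₀ (by positivity)]
    rw [hTdef] at hz
    rw [← hsdef]
    nlinarith
  have hρm : Measurable ρ := by
    apply ENNReal.measurable_ofReal.comp
    apply Real.continuous_exp.measurable.comp
    apply Measurable.div_const
    exact ((measurable_lin d).const_mul 2).sub measurable_const
  -- dp_combo hypotheses
  have h₁ : ∀ S, MeasurableSet S → S ⊆ Aᶜ →
      (Γ.withDensity ρ) S ≤ ENNReal.ofReal (Real.exp ε) * Γ S := by
    intro S hS hsub
    rw [withDensity_apply _ hS]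
    calc ∫⁻ z in S, ρ z ∂Γ ≤ ∫⁻ _ in S, ENNReal.ofReal (Real.exp ε) ∂Γ := by
          apply setLIntegral_mono measurable_const
          intro z hz
          exact hρ_le z (hsub hz)
      _ = ENNReal.ofReal (Real.exp ε) * Γ S := by
          rw [setLIntegral_const]
  have h₂ : ∀ S, MeasurableSet S → S ⊆ A →
      ENNReal.ofReal (Real.exp ε) * Γ S ≤ (Γ.withDensity ρ) S := by
    intro S hS hsub
    rw [withDensity_apply _ hS]
    calc ENNReal.ofReal (Real.exp ε) * Γ S = ∫⁻ _ in S, ENNReal.ofReal (Real.exp ε) ∂Γ := by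
          rw [setLIntegral_const]
      _ ≤ ∫⁻ z in S, ρ z ∂Γ := by
          apply setLIntegral_mono hρm
          intro z hz
          exact hρ_ge z (hsub hz)
  have hcurve_nonneg : 0 ≤ stdNormalCDF (c / (2 * σ) - ε * σ / c)
      - Real.exp ε * stdNormalCDF (-(c / (2 * σ)) - ε * σ / c) :=
    le_of_lt (curve_pos' σ ε hσ hc)
  have h₃ : (Γ.withDensity ρ) A ≤ ENNReal.ofReal (Real.exp ε) * Γ A
      + ENNReal.ofReal (stdNormalCDF (c / (2 * σ) - ε * σ / c)
        - Real.exp ε * stdNormalCDF (-(c / (2 * σ)) - ε * σ / c)) := by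
    rw [hψ₁, hψ₂, ← ENNReal.ofReal_mul (Real.exp_nonneg ε),
      ← ENNReal.ofReal_add (mul_nonneg (Real.exp_nonneg ε) (stdNormalCDF_nonneg _))
        hcurve_nonneg]
    apply ENNReal.ofReal_le_ofReal
    linarith
  have hmain := dp_combo (Γ.withDensity ρ) Γ (ENNReal.ofReal (Real.exp ε))
    (ENNReal.ofReal (stdNormalCDF (c / (2 * σ) - ε * σ / c)
        - Real.exp ε * stdNormalCDF (-(c / (2 * σ)) - ε * σ / c)))
    ENNReal.ofReal_ne_top A hAm h₁ h₂ h₃ ((fun z => x' + z) ⁻¹' O) (hmx' hO)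
  rw [hcomp, Measure.map_apply hmx' hO, Measure.map_apply hmx' hO]
  calc (Γ.withDensity ρ) ((fun z => x' + z) ⁻¹' O)
      ≤ ENNReal.ofReal (Real.exp ε) * Γ ((fun z => x' + z) ⁻¹' O)
        + ENNReal.ofReal (stdNormalCDF (c / (2 * σ) - ε * σ / c)
          - Real.exp ε * stdNormalCDF (-(c / (2 * σ)) - ε * σ / c)) := hmain
    _ ≤ ENNReal.ofReal (Real.exp ε) * Γ ((fun z => x' + z) ⁻¹' O) + ENNReal.ofReal δ' := by
        apply add_le_add_right
        apply ENNReal.ofReal_le_ofReal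
        calc _ ≤ _ := hδ'



/-- Analytic Gaussian mechanism (Balle–Wang): if `f : X → ℝ^k` has L₂-sensitivity exactly `Δ`,
then the Gaussian mechanism `M(D) = f(D) + z`, `z ~ N(0, σ²I)`, satisfies `(ε, δ)`-DP for
`ε ≥ 0` if and only if `Φ(Δ/(2σ) − εσ/Δ) − e^ε Φ(−Δ/(2σ) − εσ/Δ) ≤ δ`. -/
theorem analytic_gaussian_mechanism {X : Type*} (Neighbor : X → X → Prop)
    (k : ℕ) (f : X → (Fin k → ℝ)) (Δ σ ε δ : ℝ)
    (hΔ : 0 < Δ) (hσ : 0 < σ) (hε : 0 ≤ ε)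
    (hsens : ∀ D D', Neighbor D D' → Real.sqrt (∑ i, (f D i - f D' i) ^ 2) ≤ Δ)
    (hattain : ∃ D D', Neighbor D D' ∧ Real.sqrt (∑ i, (f D i - f D' i) ^ 2) = Δ) :
    DiffPrivate Neighbor
      (fun D => Measure.map (fun z => f D + z)
        (Measure.pi fun _ : Fin k => gaussianReal 0 (Real.toNNReal (σ ^ 2)))) ε δ ↔
      stdNormalCDF (Δ / (2 * σ) - ε * σ / Δ)
        - Real.exp ε * stdNormalCDF (-(Δ / (2 * σ)) - ε * σ / Δ) ≤ δ := by
  constructor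
  · intro hDP
    obtain ⟨D, D', hN, hat⟩ := hattain
    set d : Fin k → ℝ := f D - f D' with hddef
    have hat' : Real.sqrt (∑ i, d i ^ 2) = Δ := hat
    have hsnn : (0:ℝ) ≤ ∑ i, d i ^ 2 := Finset.sum_nonneg fun _ _ => sq_nonneg _
    have hΔs : ∑ i, d i ^ 2 = Δ ^ 2 := by
      rw [← hat']; exact (Real.sq_sqrt hsnn).symm
    have hd' : 0 < Real.sqrt (∑ i, d i ^ 2) := by rw [hat']; exact hΔ
    set T : ℝ := ε * σ ^ 2 + (∑ i, d i ^ 2) / 2 with hTdef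
    set t' : ℝ := T + ∑ i, d i * f D' i with ht'def
    have hA := hDP D D' hN {ω | t' ≤ ∑ i, d i * ω i} (halfspace_set_meas d t')
    simp only at hA
    rw [map_halfspace, map_halfspace] at hA
    have hdiff : ∑ i, d i * f D i - ∑ i, d i * f D' i = ∑ i, d i ^ 2 := by
      rw [← Finset.sum_sub_distrib]
      congr 1; funext i
      have : d i = f D i - f D' i := rfl
      rw [this]; ring
    have e1 : t' - ∑ i, d i * f D i = T - ∑ i, d i ^ 2 := by
      rw [ht'def]; linarith
    have e2 : t' - ∑ i, d i * f D' i = T := by rw [ht'def]; ring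
    rw [e1, e2, halfspace σ hσ d hd', halfspace σ hσ d hd'] at hA
    have harg1 : -(T - ∑ i, d i ^ 2) / (Real.sqrt (∑ i, d i ^ 2) * σ)
        = Δ / (2 * σ) - ε * σ / Δ := by
      rw [hat', hTdef, hΔs]
      field_simp
      ring
    have harg2 : -T / (Real.sqrt (∑ i, d i ^ 2) * σ)
        = -(Δ / (2 * σ)) - ε * σ / Δ := by
      rw [hat', hTdef, hΔs]
      field_simp
      ring
    rw [harg1, harg2] at hA
    have hofδ : ENNReal.ofReal δ = ENNReal.ofReal (max δ 0) := by
      rcases le_total δ 0 with h | h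
      · rw [max_eq_right h, ENNReal.ofReal_of_nonpos h, ENNReal.ofReal_zero]
      · rw [max_eq_left h]
    rw [hofδ, ← ENNReal.ofReal_mul (Real.exp_nonneg ε),
      ← ENNReal.ofReal_add (mul_nonneg (Real.exp_nonneg ε) (stdNormalCDF_nonneg _))
        (le_max_right δ 0)] at hA
    have hreal : stdNormalCDF (Δ / (2 * σ) - ε * σ / Δ)
        ≤ Real.exp ε * stdNormalCDF (-(Δ / (2 * σ)) - ε * σ / Δ) + max δ 0 := by
      refine (ENNReal.ofReal_le_ofReal_iff ?_).mp hA
      have := mul_nonneg (Real.exp_nonneg ε) (stdNormalCDF_nonneg (-(Δ / (2 * σ)) - ε * σ / Δ))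
      have := le_max_right δ 0
      linarith
    rcases le_total 0 δ with hδ0 | hδ0
    · rw [max_eq_left hδ0] at hreal
      linarith
    · exfalso
      rw [max_eq_right hδ0] at hreal
      have := curve_pos' σ ε hσ hΔ
      linarith
  · intro hcurve D D' hN O hO
    simp only
    by_cases hd : 0 < Real.sqrt (∑ i, (f D i - f D' i) ^ 2)
    · refine pair_bound σ ε δ hσ hε (f D) (f D') hd ?_ O hO
      have h1 := curve_mono' σ ε hσ hε hd (hsens D D' hN)
      linarith
    · have hfd : f D = f D' := by
        push_neg at hd
        have hnn : (0:ℝ) ≤ ∑ j, (f D j - f D' j) ^ 2 :=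
          Finset.sum_nonneg fun _ _ => sq_nonneg _
        have hz : Real.sqrt (∑ j, (f D j - f D' j) ^ 2) = 0 :=
          le_antisymm hd (Real.sqrt_nonneg _)
        have hsum : ∑ j, (f D j - f D' j) ^ 2 = 0 := by
          have := Real.sq_sqrt hnn
          rw [hz] at this
          simpa using this.symm
        funext i
        have hterm := (Finset.sum_eq_zero_iff_of_nonneg
          (fun j _ => sq_nonneg (f D j - f D' j))).mp hsum i (Finset.mem_univ i)
        have : f D i - f D' i = 0 := by
          nlinarith [hterm]
        linarith
      rw [hfd]
      have h1 : (1:ℝ≥0∞) ≤ ENNReal.ofReal (Real.exp ε) := by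
        rw [ENNReal.one_le_ofReal]
        exact Real.one_le_exp hε
      calc Measure.map (fun z => f D' + z)
            (Measure.pi fun _ : Fin k => gaussianReal 0 (Real.toNNReal (σ ^ 2))) O
          = 1 * Measure.map (fun z => f D' + z)
            (Measure.pi fun _ : Fin k => gaussianReal 0 (Real.toNNReal (σ ^ 2))) O :=
            (one_mul _).symm
        _ ≤ ENNReal.ofReal (Real.exp ε) * Measure.map (fun z => f D' + z)
            (Measure.pi fun _ : Fin k => gaussianReal 0 (Real.toNNReal (σ ^ 2))) O :=
            mul_le_mul_left h1 _
        _ ≤ _ := le_self_add
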